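/- arXiv:2111.11358 — 2 statements merged into one kernel-verified Lean document; each statement's English description precedes it below -/
import Mathlib

section
/- Let A be an m×n matrix with nonnegative entries and unit-norm rows, b ≥ 0, and let θ ∈ R^n with ||θ||_2 ≤ E. For any x violating Ax ≤ b with nearest feasible point x_0 such that x - x_0 lies in the conic hull of the active rows A' of A (all tight at x_0), we have θ^T(x - x_0) ≤ E · Σ_i max(A'_i x - b'_i, 0). In particular the utility gain from violating the constraints is at most E times the sum of positive constraint violations. -/
/-!
The displacement `x - x0 = ∑ kᵢ Aᵢ` is a nonnegative combination of unit vectors with pairwise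
nonnegative inner products (the rows are entrywise nonnegative). Hence `kᵢ ≤ ⟪Aᵢ, x - x0⟫`, which
is the violation `⟪Aᵢ, x⟫ - bᵢ` of the tight constraint `i`, while `‖x - x0‖ ≤ ∑ kᵢ` by the
triangle inequality. Cauchy–Schwarz with `‖θ‖ ≤ E` finishes the proof.
-/

open scoped RealInnerProductSpace

theorem EuclideanSpace.inner_nonneg_of_nonneg {ι : Type*} [Fintype ι]
    {v w : EuclideanSpace ℝ ι} (hv : ∀ i, 0 ≤ v i) (hw : ∀ i, 0 ≤ w i) : 0 ≤ ⟪v, w⟫ := by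
  rw [PiLp.inner_apply]
  exact Finset.sum_nonneg fun i _ => by simpa using mul_nonneg (hw i) (hv i)

section Cone

variable {ι F : Type*} [Fintype ι] [NormedAddCommGroup F] [InnerProductSpace ℝ F]
  {v : ι → F} {k : ι → ℝ}

theorem coeff_le_inner_sum_smul {i : ι} (hv : ‖v i‖ = 1) (hpos : ∀ j, 0 ≤ ⟪v i, v j⟫)
    (hk : ∀ j, 0 ≤ k j) : k i ≤ ⟪v i, ∑ j, k j • v j⟫ := by
  rw [inner_sum]
  simp only [real_inner_smul_right]
  simpa [hv] using Finset.single_le_sum (f := fun j => k j * ⟪v i, v j⟫)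
    (fun j _ => mul_nonneg (hk j) (hpos j)) (Finset.mem_univ i)

theorem norm_sum_smul_le_sum_inner (hv : ∀ i, ‖v i‖ = 1) (hpos : ∀ i j, 0 ≤ ⟪v i, v j⟫)
    (hk : ∀ i, 0 ≤ k i) : ‖∑ i, k i • v i‖ ≤ ∑ i, ⟪v i, ∑ j, k j • v j⟫ :=
  calc ‖∑ i, k i • v i‖ ≤ ∑ i, ‖k i • v i‖ := norm_sum_le _ _
    _ = ∑ i, k i := by
      refine Finset.sum_congr rfl fun i _ => ?_
      rw [norm_smul, hv i, Real.norm_of_nonneg (hk i), mul_one]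
    _ ≤ ∑ i, ⟪v i, ∑ j, k j • v j⟫ :=
      Finset.sum_le_sum fun i _ => coeff_le_inner_sum_smul (hv i) (hpos i) hk

end Cone

theorem stmt_5_general (n m : ℕ) (E : ℝ)
    (θ : EuclideanSpace ℝ (Fin n)) (hθ : ‖θ‖ ≤ E)
    (A : Fin m → EuclideanSpace ℝ (Fin n)) (b : Fin m → ℝ)
    (hunit : ∀ i, ‖A i‖ = 1) (hA : ∀ i j, 0 ≤ A i j)
    (x x0 : EuclideanSpace ℝ (Fin n))
    (htight : ∀ i, ⟪A i, x0⟫ = b i)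
    (k : Fin m → ℝ) (hk : ∀ i, 0 ≤ k i)
    (hcone : x - x0 = ∑ i, k i • A i) :
    ⟪θ, x - x0⟫ ≤ E * ∑ i, max (⟪A i, x⟫ - b i) 0 := by
  have hviolation : ∀ i, ⟪A i, x - x0⟫ = ⟪A i, x⟫ - b i := fun i => by
    rw [inner_sub_right, htight i]
  have hdist : ‖x - x0‖ ≤ ∑ i, max (⟪A i, x⟫ - b i) 0 := by
    calc ‖x - x0‖ ≤ ∑ i, ⟪A i, x - x0⟫ := by
          rw [hcone]
          exact norm_sum_smul_le_sum_inner hunit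
            (fun i j => EuclideanSpace.inner_nonneg_of_nonneg (hA i) (hA j)) hk
      _ ≤ ∑ i, max (⟪A i, x⟫ - b i) 0 :=
          Finset.sum_le_sum fun i _ => hviolation i ▸ le_max_left _ _
  calc ⟪θ, x - x0⟫ ≤ ‖θ‖ * ‖x - x0‖ := real_inner_le_norm _ _
    _ ≤ E * ∑ i, max (⟪A i, x⟫ - b i) 0 :=
      mul_le_mul hθ hdist (norm_nonneg _) ((norm_nonneg θ).trans hθ)

theorem stmt_5 (n m : ℕ) (E : ℝ)
    (θ : EuclideanSpace ℝ (Fin n)) (hθ : ‖θ‖ ≤ E)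
    (A : Fin m → EuclideanSpace ℝ (Fin n)) (b : Fin m → ℝ)
    (hunit : ∀ i, ‖A i‖ = 1) (hA : ∀ i j, 0 ≤ A i j) (hb : ∀ i, 0 ≤ b i)
    (x x0 : EuclideanSpace ℝ (Fin n))
    (hinfeas : ∃ i, b i < ⟪A i, x⟫)
    (htight : ∀ i, ⟪A i, x0⟫ = b i)
    (k : Fin m → ℝ) (hk : ∀ i, 0 ≤ k i)
    (hcone : x - x0 = ∑ i, k i • A i) :
    ⟪θ, x - x0⟫ ≤ E * ∑ i, max (⟪A i, x⟫ - b i) 0 :=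
  stmt_5_general n m E θ hθ A b hunit hA x x0 htight k hk hcone
end

section
/- Let α_1, ..., α_n ∈ R^n be linearly independent unit vectors, and let P be an invertible matrix such that {P α_i} is an orthonormal basis of R^n. Let λ_max be the largest eigenvalue of P^T P. Then for every unit vector θ in the dual cone {θ : α_i^T θ ≥ 0 for all i}, we have max_i α_i^T θ ≥ 1/(√n · λ_max). -/
/-!
Write `Q = PᵀP` and let `A` be the matrix with rows `αᵢ`. Orthonormality of the `Pαᵢ` says
`A Q Aᵀ = 1`; as `A` is square this forces `Aᵀ A Q = 1`, so `v ⬝ w = (A v) ⬝ (A Q w)`.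
With `t = A θ` (the numbers `αᵢ ⬝ θ`) and `c = A Q θ` this gives `1 = θ ⬝ θ = t ⬝ c` and
`c ⬝ c = θ ⬝ Q θ ≤ λ_max`. Cauchy–Schwarz then yields `1 ≤ λ_max · n · maxᵢ tᵢ²`, and
`λ_max ≥ αᵢ ⬝ Q αᵢ = 1` turns this into `maxᵢ tᵢ ≥ 1 / (√n λ_max)`.
-/

open Matrix

section

variable {n R : Type*} [Fintype n]

theorem Matrix.IsHermitian.dotProduct_mulVec_le_of_forall_eigenvalues_le [DecidableEq n]
    {Q : Matrix n n ℝ} (hQ : Q.IsHermitian) {lam : ℝ} (hlam : ∀ i, hQ.eigenvalues i ≤ lam)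
    (v : n → ℝ) : v ⬝ᵥ (Q *ᵥ v) ≤ lam * (v ⬝ᵥ v) := by
  open scoped MatrixOrder in
  have hle : Q ≤ algebraMap ℝ _ lam := by
    refine le_algebraMap_of_spectrum_le (fun x hx => ?_) hQ
    rw [hQ.spectrum_real_eq_range_eigenvalues] at hx
    obtain ⟨i, rfl⟩ := hx
    exact hlam i
  simpa only [Algebra.algebraMap_eq_smul_one, sub_mulVec, smul_mulVec, one_mulVec, dotProduct_sub,
    dotProduct_smul, smul_eq_mul, star_trivial, sub_nonneg] using
    (Matrix.le_iff.mp hle).dotProduct_mulVec_nonneg v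

theorem dotProduct_transpose_mul_mulVec [CommRing R] {m : Type*} [Fintype m]
    (P : Matrix m n R) (u v : n → R) : u ⬝ᵥ ((Pᵀ * P) *ᵥ v) = (P *ᵥ u) ⬝ᵥ (P *ᵥ v) := by
  rw [← mulVec_mulVec, dotProduct_mulVec, vecMul_transpose]

theorem mul_mul_transpose_apply [CommRing R] (A Q : Matrix n n R) (i j : n) :
    (A * Q * Aᵀ) i j = A i ⬝ᵥ (Q *ᵥ A j) := by
  rw [mul_assoc, mul_apply']
  rfl

theorem dotProduct_eq_of_mul_mul_transpose_eq_one [CommRing R] [DecidableEq n]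
    {A Q : Matrix n n R} (h : A * Q * Aᵀ = 1) (v w : n → R) :
    v ⬝ᵥ w = (A *ᵥ v) ⬝ᵥ (A *ᵥ (Q *ᵥ w)) := by
  have h' : Aᵀ * A * Q = 1 := mul_assoc Aᵀ A Q ▸ mul_eq_one_comm.mp h
  rw [← vecMul_transpose, ← dotProduct_mulVec, mulVec_mulVec, mulVec_mulVec, h', one_mulVec]

theorem exists_sq_dotProduct_le [Nonempty n] (c t : n → ℝ) :
    ∃ i, (c ⬝ᵥ t) ^ 2 ≤ (c ⬝ᵥ c) * (Fintype.card n * t i ^ 2) := by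
  obtain ⟨i, -, hi⟩ := Finset.exists_max_image Finset.univ (fun j => t j ^ 2) Finset.univ_nonempty
  refine ⟨i, ?_⟩
  have hcs : (c ⬝ᵥ t) ^ 2 ≤ (c ⬝ᵥ c) * (t ⬝ᵥ t) := by
    simpa only [dotProduct, sq] using Finset.sum_mul_sq_le_sq_mul_sq Finset.univ c t
  have ht : t ⬝ᵥ t ≤ Fintype.card n * t i ^ 2 :=
    calc t ⬝ᵥ t = ∑ j, t j ^ 2 := by simp only [dotProduct, sq]
      _ ≤ ∑ _j : n, t i ^ 2 := Finset.sum_le_sum hi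
      _ = Fintype.card n * t i ^ 2 := by simp
  exact hcs.trans (mul_le_mul_of_nonneg_left ht (dotProduct_self_star_nonneg c))

end

theorem one_div_sqrt_mul_le_of_one_le_mul_sq {n : ℕ} {lam t : ℝ} (hlam : 1 ≤ lam) (ht : 0 ≤ t)
    (h : 1 ≤ lam * (n * t ^ 2)) : 1 / (Real.sqrt n * lam) ≤ t := by
  have hn : 0 < n := Nat.pos_of_ne_zero fun h0 => by norm_num [h0] at h
  have hsq : 1 ≤ (t * (Real.sqrt n * lam)) ^ 2 := by
    rw [mul_pow, mul_pow, Real.sq_sqrt n.cast_nonneg]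
    nlinarith
  rw [div_le_iff₀ (by positivity)]
  exact ((one_le_sq_iff_one_le_abs _).mp hsq).trans_eq (abs_of_nonneg (by positivity))

theorem stmt_15_general (n : ℕ) (α : Fin n → (Fin n → ℝ))
    (hunit : ∀ i, α i ⬝ᵥ α i = 1)
    (P : Matrix (Fin n) (Fin n) ℝ)
    (horth : ∀ i j, (P *ᵥ α i) ⬝ᵥ (P *ᵥ α j) = if i = j then (1:ℝ) else 0)
    (hherm : (P.transpose * P).IsHermitian)
    (lammax : ℝ) (hlam : IsGreatest (Set.range hherm.eigenvalues) lammax)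
    (θ : Fin n → ℝ) (hθ : θ ⬝ᵥ θ = 1) (hdual : ∀ i, 0 ≤ α i ⬝ᵥ θ) :
    ∃ i, 1 / (Real.sqrt n * lammax) ≤ α i ⬝ᵥ θ := by
  set Q := Pᵀ * P
  set A : Matrix (Fin n) (Fin n) ℝ := of α
  have hQ : ∀ u v, u ⬝ᵥ (Q *ᵥ v) = (P *ᵥ u) ⬝ᵥ (P *ᵥ v) := dotProduct_transpose_mul_mulVec P
  have hAQA : A * Q * Aᵀ = 1 := by
    ext i j
    rw [mul_mul_transpose_apply, hQ]
    exact horth i j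
  have hray : ∀ v, v ⬝ᵥ (Q *ᵥ v) ≤ lammax * (v ⬝ᵥ v) :=
    hherm.dotProduct_mulVec_le_of_forall_eigenvalues_le fun i => hlam.2 ⟨i, rfl⟩
  have hne : Nonempty (Fin n) := (isEmpty_or_nonempty _).resolve_left fun _ => by
    simp [dotProduct] at hθ
  have hlam_one : 1 ≤ lammax := by
    obtain ⟨i₀⟩ := hne
    simpa [hQ, horth, hunit] using hray (α i₀)
  have htc : (A *ᵥ θ) ⬝ᵥ (A *ᵥ (Q *ᵥ θ)) = 1 := by
    rw [← dotProduct_eq_of_mul_mul_transpose_eq_one hAQA, hθ]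
  have hcc : (A *ᵥ (Q *ᵥ θ)) ⬝ᵥ (A *ᵥ (Q *ᵥ θ)) ≤ lammax := by
    rw [← dotProduct_eq_of_mul_mul_transpose_eq_one hAQA, dotProduct_comm]
    simpa [hθ] using hray θ
  obtain ⟨i, hi⟩ := exists_sq_dotProduct_le (A *ᵥ (Q *ᵥ θ)) (A *ᵥ θ)
  rw [dotProduct_comm, htc, one_pow, Fintype.card_fin] at hi
  exact ⟨i, one_div_sqrt_mul_le_of_one_le_mul_sq hlam_one (hdual i)
    (hi.trans (mul_le_mul_of_nonneg_right hcc (by positivity)))⟩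

theorem stmt_15 (n : ℕ) (α : Fin n → (Fin n → ℝ))
    (hunit : ∀ i, α i ⬝ᵥ α i = 1)
    (hindep : LinearIndependent ℝ α)
    (P : Matrix (Fin n) (Fin n) ℝ) (hP : IsUnit P.det)
    (horth : ∀ i j, (P *ᵥ α i) ⬝ᵥ (P *ᵥ α j) = if i = j then (1:ℝ) else 0)
    (hherm : (P.transpose * P).IsHermitian)
    (lammax : ℝ) (hlam : IsGreatest (Set.range hherm.eigenvalues) lammax)
    (θ : Fin n → ℝ) (hθ : θ ⬝ᵥ θ = 1) (hdual : ∀ i, 0 ≤ α i ⬝ᵥ θ) :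
    ∃ i, 1 / (Real.sqrt n * lammax) ≤ α i ⬝ᵥ θ :=
  stmt_15_general n α hunit P horth hherm lammax hlam θ hθ hdual
end
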